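/- Let V be a finite type and r : V → V → Prop an acyclic relation (the transitive closure of r is irreflexive). If L ⊆ M are two sets both closed under r-predecessors and M ∖ L contains at least two elements, then there exists a set N closed under r-predecessors with L ⊊ N ⊊ M. (Consequently, any two comparable monotone staircase cuts that differ by two or more blocks admit a strictly intermediate monotone staircase cut, so maximal chains in the Hasse diagram of monotone staircase cuts advance one block at a time.) -/
import Mathlib


/-- A set `L` is closed under `r`-predecessors: every cut edge of `r` is directed
from `L` to its complement, so `(L, Lᶜ)` is a monotone staircase cut. -/
def PredClosed {V : Type*} (r : V → V → Prop) (L : Set V) : Prop :=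
  ∀ u v, r u v → v ∈ L → u ∈ L

/-- Between two comparable monotone staircase cuts differing by at least two
blocks there is a strictly intermediate monotone staircase cut. -/
theorem exists_intermediate_staircase {V : Type*} [Finite V] (r : V → V → Prop)
    (hacyc : Irreflexive (Relation.TransGen r)) {L M : Set V}
    (hL : PredClosed r L) (hM : PredClosed r M) (hLM : L ⊆ M)
    (htwo : ∃ a ∈ M \ L, ∃ b ∈ M \ L, a ≠ b) :
    ∃ N : Set V, PredClosed r N ∧ L ⊂ N ∧ N ⊂ M := by
  obtain ⟨a, ha, b, hb, hab⟩ := htwo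
  have : IsIrrefl V (Relation.TransGen r) := ⟨hacyc⟩
  have hwf : WellFounded (Relation.TransGen r) :=
    Finite.wellFounded_of_trans_of_irrefl _
  obtain ⟨x, hx, hxmin⟩ := hwf.has_min (M \ L) ⟨a, ha⟩
  refine ⟨L ∪ {x}, ?_, ?_, ?_⟩
  · intro u v huv hv
    rcases hv with hv | hv
    · exact Or.inl (hL u v huv hv)
    · rcases hv
      have huM : u ∈ M := hM u x huv hx.1
      by_cases huL : u ∈ L
      · exact Or.inl huL
      · exact absurd (Relation.TransGen.single huv) (hxmin u ⟨huM, huL⟩)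
  · constructor
    · exact Set.subset_union_left
    · intro h
      exact hx.2 (h (Or.inr rfl))
  · constructor
    · rintro v (hv | hv)
      · exact hLM hv
      · rcases hv; exact hx.1
    · intro h
      rcases eq_or_ne a x with rfl | hax
      · rcases h hb.1 with hbL | hbx
        · exact hb.2 hbL
        · exact hab hbx.symm
      · rcases h ha.1 with haL | hax'
        · exact ha.2 haL
        · exact hax hax'
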